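/- The sequence of primorial numbers {P_n}, defined by P_n = ∏_{k=1}^n p_k where p_k is the k-th prime, is not locally Benford distributed of order 2 (and hence not of any order k ≥ 2). -/

import Mathlib

open Filter

/-- `x` has leading digit `d` in base 10: `d·10^k ≤ x < (d+1)·10^k` for some integer `k`. -/
def HasLeadingDigit (x : ℝ) (d : ℕ) : Prop :=
  ∃ k : ℤ, (d : ℝ) * 10 ^ k ≤ x ∧ x < ((d : ℝ) + 1) * 10 ^ k

/-- The Benford frequency `P(d) = log₁₀ (1 + 1/d)` of digit `d`. -/
noncomputable def benfordP (d : ℕ) : ℝ := Real.logb 10 (1 + 1 / (d : ℝ))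

/-- A sequence is Benford distributed if for each digit `d ∈ {1,…,9}` the density of
indices `n` with `D(a_n) = d` equals `P(d)`. -/
def BenfordDistributed (a : ℕ → ℝ) : Prop :=
  ∀ d : ℕ, 1 ≤ d → d ≤ 9 →
    Tendsto
      (fun N : ℕ =>
        (Nat.card {n : ℕ | 1 ≤ n ∧ n ≤ N ∧ HasLeadingDigit (a n) d} : ℝ) / N)
      atTop (nhds (benfordP d))

/-- A sequence is locally Benford distributed of order `k` if every `k`-tuple of digits
in `{1,…,9}` occurs among leading digits of `k` consecutive terms with density
`P(d₀)⋯P(d_{k-1})`. -/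
def LocallyBenfordDistributed (a : ℕ → ℝ) (k : ℕ) : Prop :=
  ∀ d : Fin k → ℕ, (∀ i, 1 ≤ d i ∧ d i ≤ 9) →
    Tendsto
      (fun N : ℕ =>
        (Nat.card {n : ℕ | 1 ≤ n ∧ n ≤ N ∧
            ∀ i : Fin k, HasLeadingDigit (a (n + (i : ℕ))) (d i)} : ℝ) / N)
      atTop (nhds (∏ i : Fin k, benfordP (d i)))

/-- `waitingTime a d i` is the waiting time `w_i(d) = n_{i+1}^{(d)} - n_i^{(d)}`, where
`n_1^{(d)} < n_2^{(d)} < ⋯` enumerates `{n ∈ ℕ, n ≥ 1 : D(a_n) = d}`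
(the `j`-th element of this set, 1-indexed, being `Nat.nth · (j-1)`). -/
noncomputable def waitingTime (a : ℕ → ℝ) (d : ℕ) (i : ℕ) : ℕ :=
  Nat.nth (fun n => 1 ≤ n ∧ HasLeadingDigit (a n) d) i -
    Nat.nth (fun n => 1 ≤ n ∧ HasLeadingDigit (a n) d) (i - 1)

/-- A sequence has Benford distributed waiting times if for each digit `d ∈ {1,…,9}`
the waiting times between occurrences of leading digit `d` take value `k` with density
`P(d)(1-P(d))^{k-1}`. -/
def BenfordWaitingTimes (a : ℕ → ℝ) : Prop :=
  ∀ d : ℕ, 1 ≤ d → d ≤ 9 → ∀ k : ℕ, 1 ≤ k →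
    Tendsto
      (fun N : ℕ =>
        (Nat.card {i : ℕ | 1 ≤ i ∧ i ≤ N ∧ waitingTime a d i = k} : ℝ) / N)
      atTop (nhds (benfordP d * (1 - benfordP d) ^ (k - 1)))

/-- A sequence `u` of real numbers is uniformly distributed modulo 1. -/
def UniformlyDistributedMod1 (u : ℕ → ℝ) : Prop :=
  ∀ t : ℝ, 0 ≤ t → t ≤ 1 →
    Tendsto
      (fun N : ℕ =>
        (Nat.card {n : ℕ | 1 ≤ n ∧ n ≤ N ∧ Int.fract (u n) ≤ t} : ℝ) / N)
      atTop (nhds t)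

/-- `nthPrime n` is the `n`-th prime (1-indexed): `nthPrime 1 = 2`, `nthPrime 2 = 3`, … -/
noncomputable def nthPrime (n : ℕ) : ℕ := Nat.nth Nat.Prime (n - 1)

/-!
If `D(P_n) = 9` and the next prime `p_{n+1}` has mantissa in `[2, 9]`, then the mantissa of
`P_{n+1} = P_n p_{n+1}` lies in `[1.8, 9)`, so `D(P_{n+1}) ≠ 9`. Hence no index `n` with
`2·10^m < p_{n+1} ≤ 9·10^m` starts a pair of leading digits `(9, 9)`. By Chebyshev's bounds the
number of such indices is a fixed proportion of `π(2·10^m)`, so the counting function of the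
pattern `(9, 9, …)` stalls over intervals `(N, (6/5) N]` for arbitrarily large `N`, forcing its
density to be `0 ≠ P(9)^k`.
-/

open Topology
open scoped Nat.Prime

theorem not_hasLeadingDigit_nine_mul {x y : ℝ} {i : ℤ} (hx : HasLeadingDigit x 9)
    (hy₁ : 2 * 10 ^ i ≤ y) (hy₂ : y ≤ 9 * 10 ^ i) : ¬ HasLeadingDigit (x * y) 9 := by
  obtain ⟨j, hxj₁, hxj₂⟩ := hx
  rintro ⟨k, hk₁, hk₂⟩
  push_cast at hxj₁ hxj₂ hk₁ hk₂
  have h10 : (10 : ℝ) ≠ 0 := by norm_num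
  have hpow : (10 : ℝ) ^ (i + j + 1) = 10 * (10 ^ i * 10 ^ j) := by
    rw [zpow_add₀ h10, zpow_add₀ h10, zpow_one]; ring
  have hi : (0 : ℝ) < 10 ^ i := by positivity
  have hj : (0 : ℝ) < 10 ^ j := by positivity
  have hlow : 18 * (10 ^ i * 10 ^ j) ≤ x * y := by nlinarith
  have hup : x * y < 9 * 10 ^ (i + j + 1) := by
    rw [hpow]; nlinarith
  have hk : k < i + j + 1 :=
    (zpow_lt_zpow_iff_right₀ (by norm_num : (1 : ℝ) < 10)).mp (by linarith)
  have hk' : (10 : ℝ) ^ (k + 1) ≤ 10 ^ (i + j + 1) :=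
    zpow_le_zpow_right₀ (by norm_num) (by omega)
  rw [zpow_add_one₀ h10, hpow] at hk'
  nlinarith

theorem eq_zero_of_tendsto_card_div_of_gaps {ι : Type*} {l : Filter ι} [l.NeBot]
    {Q : ℕ → Prop} {c r : ℝ} {A B : ι → ℕ}
    (hc : Tendsto (fun N : ℕ => (Nat.card {n : ℕ | 1 ≤ n ∧ n ≤ N ∧ Q n} : ℝ) / N) atTop (𝓝 c))
    (hr : 1 < r) (hA : Tendsto A l atTop) (hAB : ∀ᶠ i in l, r * A i ≤ B i)
    (hgap : ∀ᶠ i in l, ∀ n, A i < n → n ≤ B i → ¬ Q n) : c = 0 := by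
  set F : ℕ → ℕ := fun N => Nat.card {n : ℕ | 1 ≤ n ∧ n ≤ N ∧ Q n}
  have hA_le_B : ∀ᶠ i in l, A i ≤ B i := hAB.mono fun i hi => by
    exact_mod_cast le_trans (le_mul_of_one_le_left (Nat.cast_nonneg _) hr.le) hi
  have hF : ∀ᶠ i in l, F (B i) = F (A i) := by
    filter_upwards [hA_le_B, hgap] with i hle hgap
    suffices hset : {n : ℕ | 1 ≤ n ∧ n ≤ B i ∧ Q n} = {n | 1 ≤ n ∧ n ≤ A i ∧ Q n} by
      simp only [F, hset]
    ext n
    refine ⟨fun ⟨h₀, h₁, hQ⟩ => ⟨h₀, ?_, hQ⟩, fun ⟨h₀, h₁, hQ⟩ => ⟨h₀, h₁.trans hle, hQ⟩⟩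
    by_contra! h
    exact hgap n h h₁ hQ
  have hB : Tendsto B l atTop := tendsto_atTop_mono' l hA_le_B hA
  have hratio : ∀ᶠ i in l, (F (B i) : ℝ) / B i ≤ (F (A i) : ℝ) / A i / r := by
    filter_upwards [hF, hAB, hA.eventually_gt_atTop 0] with i hFi hABi hApos
    rw [hFi, div_div, mul_comm]
    exact div_le_div_of_nonneg_left (Nat.cast_nonneg _) (by positivity) hABi
  have hle : c ≤ c / r := le_of_tendsto_of_tendsto (hc.comp hB) ((hc.comp hA).div_const r) hratio
  have hnonneg : 0 ≤ c := ge_of_tendsto' hc fun N => by positivity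
  rw [le_div_iff₀ (by linarith)] at hle
  nlinarith

theorem eventually_le_primeCounting {ε : ℝ} (hε : 0 < ε) :
    ∀ᶠ x : ℝ in atTop, (Real.log 2 - ε) * x / Real.log x ≤ π ⌊x⌋₊ := by
  filter_upwards [Real.isLittleO_log_id_atTop.bound (half_pos hε), eventually_ge_atTop 2,
    eventually_ge_atTop (4 / ε)] with x hlog hx₂ hxε
  have hlogx : 0 < Real.log x := Real.log_pos (by linarith)
  rw [Real.norm_of_nonneg hlogx.le, id, Real.norm_of_nonneg (by linarith)] at hlog
  refine le_trans (div_le_div_of_nonneg_right ?_ hlogx.le) (Chebyshev.pi_ge' (by linarith))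
  have hlog_add : Real.log (x + 2) ≤ Real.log 2 + Real.log x := by
    rw [← Real.log_mul (by norm_num) (by linarith)]
    exact Real.log_le_log (by linarith) (by linarith)
  have hεx : 4 ≤ ε * x := by rwa [div_le_iff₀ hε, mul_comm] at hxε
  nlinarith [Real.log_two_lt_d9]

theorem eventually_primeCounting_two_mul_le_primeCounting_nine_mul :
    ∀ᶠ t : ℝ in atTop, 9 / 7 * (π ⌊2 * t⌋₊ : ℝ) ≤ π ⌊9 * t⌋₊ := by
  -- With `ε = log 2 / 10` the Chebyshev bounds give `9 * 0.9 / (2 * 2.1 * 3 / 2) = 9 / 7`,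
  -- the factor `3 / 2` bounding `log (9 t) / log (2 t)` once `t ≥ 81 / 8`.
  have hε : 0 < Real.log 2 / 10 := by positivity
  filter_upwards [(tendsto_id.const_mul_atTop two_pos).eventually
      (Chebyshev.eventually_primeCounting_le hε),
    (tendsto_id.const_mul_atTop (by norm_num : (0 : ℝ) < 9)).eventually
      (eventually_le_primeCounting hε), eventually_ge_atTop (81 / 8)] with t hup hlow ht₀
  simp only [id] at hup hlow
  have ht : 0 < t := by linarith
  have hlog2 : 0 < Real.log 2 := Real.log_pos one_lt_two
  have hlog4 : Real.log 4 = 2 * Real.log 2 := by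
    rw [show (4 : ℝ) = 2 ^ 2 by norm_num, Real.log_pow, Nat.cast_ofNat]
  have hL₂ : 0 < Real.log (2 * t) := Real.log_pos (by linarith)
  have hL₉ : 0 < Real.log (9 * t) := Real.log_pos (by linarith)
  have hL : 2 * Real.log (9 * t) ≤ 3 * Real.log (2 * t) := by
    have h := Real.log_le_log (by positivity) (by nlinarith : (9 * t) ^ 2 ≤ (2 * t) ^ 3)
    rw [Real.log_pow, Real.log_pow] at h
    exact_mod_cast h
  calc 9 / 7 * (π ⌊2 * t⌋₊ : ℝ)
      ≤ 9 / 7 * ((Real.log 4 + Real.log 2 / 10) * (2 * t) / Real.log (2 * t)) := by gcongr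
    _ = 27 / 5 * Real.log 2 * t / Real.log (2 * t) := by rw [hlog4]; ring
    _ ≤ (Real.log 2 - Real.log 2 / 10) * (9 * t) / Real.log (9 * t) := by
      rw [div_le_div_iff₀ hL₂ hL₉]
      nlinarith [mul_le_mul_of_nonneg_left hL (mul_pos hlog2 ht).le]
    _ ≤ π ⌊9 * t⌋₊ := hlow

theorem tendsto_primeCounting_two_mul_pow_ten :
    Tendsto (fun m : ℕ => π (2 * 10 ^ m)) atTop atTop :=
  Nat.tendsto_primeCounting.comp <|
    (tendsto_pow_atTop_atTop_of_one_lt (by norm_num)).const_mul_atTop' two_pos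

theorem eventually_mul_primeCounting_two_mul_pow_ten_le :
    ∀ᶠ m : ℕ in atTop, 6 / 5 * (π (2 * 10 ^ m) : ℝ) ≤ (π (9 * 10 ^ m) - 1 : ℕ) := by
  have hpow : Tendsto (fun m : ℕ => (10 : ℝ) ^ m) atTop atTop :=
    tendsto_pow_atTop_atTop_of_one_lt (by norm_num)
  filter_upwards [hpow.eventually eventually_primeCounting_two_mul_le_primeCounting_nine_mul,
    tendsto_primeCounting_two_mul_pow_ten.eventually_ge_atTop 12] with m hm hm₁₂
  rw [show (2 : ℝ) * 10 ^ m = (2 * 10 ^ m : ℕ) by push_cast; rfl,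
    show (9 : ℝ) * 10 ^ m = (9 * 10 ^ m : ℕ) by push_cast; rfl, Nat.floor_natCast,
    Nat.floor_natCast] at hm
  have hm₁₂' : (12 : ℝ) ≤ π (2 * 10 ^ m) := by exact_mod_cast hm₁₂
  have hpos : 1 ≤ π (9 * 10 ^ m) := by
    have : (1 : ℝ) ≤ π (9 * 10 ^ m) := by linarith
    exact_mod_cast this
  rw [Nat.cast_sub hpos, Nat.cast_one]
  linarith

theorem nth_prime_mem_Ioc {y z n : ℕ} (hy : π y ≤ n) (hz : n < π z) :
    Nat.nth Nat.Prime n ∈ Set.Ioc y z :=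
  ⟨(Nat.count_le_iff_le_nth Nat.infinite_setOfPred_prime).mp hy,
    Nat.lt_succ_iff.mp ((Nat.lt_nth_iff_count_lt Nat.infinite_setOfPred_prime).mp hz)⟩

theorem prod_Icc_nthPrime_succ (n : ℕ) :
    ∏ j ∈ Finset.Icc 1 (n + 1), nthPrime j =
      (∏ j ∈ Finset.Icc 1 n, nthPrime j) * Nat.nth Nat.Prime n := by
  rw [Finset.prod_Icc_succ_top (by omega)]
  rfl

theorem benfordP_pos {d : ℕ} (hd : 1 ≤ d) : 0 < benfordP d :=
  Real.logb_pos (by norm_num) <| by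
    simp only [lt_add_iff_pos_right, one_div, inv_pos, Nat.cast_pos]; omega

/-- The primorial numbers `P_n = ∏_{j=1}^n p_j` are not locally Benford distributed of
order 2, and hence not of any order `k ≥ 2`. -/
theorem primorial_not_locallyBenford :
    ∀ k : ℕ, 2 ≤ k →
      ¬ LocallyBenfordDistributed
        (fun n : ℕ => ((∏ j ∈ Finset.Icc 1 n, nthPrime j : ℕ) : ℝ)) k := by
  intro k hk hlocal
  have hdensity := hlocal (fun _ => 9) fun _ => ⟨by norm_num, by norm_num⟩
  have hpos : 0 < ∏ _i : Fin k, benfordP 9 :=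
    Finset.prod_pos fun _ _ => benfordP_pos (by norm_num)
  refine hpos.ne' <| eq_zero_of_tendsto_card_div_of_gaps hdensity (by norm_num : (1 : ℝ) < 6 / 5)
    (B := fun m => π (9 * 10 ^ m) - 1) tendsto_primeCounting_two_mul_pow_ten
    eventually_mul_primeCounting_two_mul_pow_ten_le
    (Eventually.of_forall fun m n hA hB hdigits => ?_)
  obtain ⟨hp₁, hp₂⟩ := nth_prime_mem_Ioc hA.le (by omega : n < π (9 * 10 ^ m))
  have h₀ := hdigits ⟨0, by omega⟩
  have h₁ := hdigits ⟨1, by omega⟩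
  simp only [add_zero, prod_Icc_nthPrime_succ, Nat.cast_mul] at h₀ h₁
  refine not_hasLeadingDigit_nine_mul (i := m) h₀ ?_ ?_ h₁ <;> rw [zpow_natCast]
  · exact_mod_cast hp₁.le
  · exact_mod_cast hp₂
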